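/- arXiv:2505.14388 — 2 statements merged into one kernel-verified Lean document; each statement's English description precedes it below -/
import Mathlib

section
/- (Plackett's identity) For ρ ∈ (−1,1), the partial derivative of the standard bivariate normal CDF with respect to the correlation satisfies ∂Φ₂(a,b;ρ)/∂ρ = φ₂(a,b;ρ). -/
open Real MeasureTheory Set Matrix

/-- standard normal density -/
noncomputable def phi (x : ℝ) : ℝ := Real.exp (-x^2/2) / Real.sqrt (2*Real.pi)

/-- standard normal CDF -/
noncomputable def Phi (x : ℝ) : ℝ := ∫ t in Set.Iic x, phi t

/-- standard normal survival function -/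
noncomputable def PhiBar (x : ℝ) : ℝ := ∫ t in Set.Ioi x, phi t

/-- standard bivariate normal density with correlation ρ -/
noncomputable def phi2 (x y ρ : ℝ) : ℝ :=
  Real.exp (-(x^2 - 2*ρ*x*y + y^2)/(2*(1-ρ^2))) / (2*Real.pi*Real.sqrt (1-ρ^2))

/-- standard bivariate normal CDF with correlation ρ -/
noncomputable def Phi2 (a b ρ : ℝ) : ℝ := ∫ x in Set.Iic a, ∫ y in Set.Iic b, phi2 x y ρ

/-- standard bivariate normal joint survival function with correlation ρ -/
noncomputable def PhiBar2 (a b ρ : ℝ) : ℝ := ∫ x in Set.Ioi a, ∫ y in Set.Ioi b, phi2 x y ρ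

/-- covariance matrix of (Q, Q^S, Q^H) -/
noncomputable def covM (θS θH θ : ℝ) : Matrix (Fin 3) (Fin 3) ℝ :=
  !![1, θS, θH; θS, 1, θ; θH, θ, 1]

/-- trivariate normal density of (Q, Q^S, Q^H) with zero means, unit variances and
correlations θS = Corr(Q,Q^S), θH = Corr(Q,Q^H), θ = Corr(Q^S,Q^H) -/
noncomputable def pdf3 (θS θH θ : ℝ) (v : Fin 3 → ℝ) : ℝ :=
  Real.exp (-(v ⬝ᵥ ((covM θS θH θ)⁻¹ *ᵥ v))/2) /
    Real.sqrt ((2*Real.pi)^3 * (covM θS θH θ).det)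

/-!
Differentiating `φ₂` in the correlation gives the mixed derivative `∂²φ₂/∂x∂y`, the bivariate
analogue of the heat equation. Differentiating under both integrals, justified by a Gaussian
envelope that is uniform for `|ρ| ≤ m < 1`, and integrating `∂²φ₂/∂x∂y` first over `(-∞, b]`
and then over `(-∞, a]` leaves `φ₂(a, b; ρ)`: the boundary terms at `-∞` vanish because the
integrands are integrable together with their derivatives.
-/

open Filter Topology

noncomputable def phi2DerivX (x y r : ℝ) : ℝ := phi2 x y r * ((r * y - x) / (1 - r^2))

noncomputable def phi2DerivXY (x y r : ℝ) : ℝ :=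
  phi2 x y r * ((r * x - y) * (r * y - x) / (1 - r^2)^2 + r / (1 - r^2))

lemma phi2_comm (x y r : ℝ) : phi2 x y r = phi2 y x r := by
  unfold phi2
  ring_nf

lemma phi2_nonneg (x y r : ℝ) : 0 ≤ phi2 x y r := by
  unfold phi2
  positivity

lemma hasDerivAt_phi2_x (y r x : ℝ) :
    HasDerivAt (fun x => phi2 x y r) (phi2DerivX x y r) x := by
  have hexp : HasDerivAt (fun x : ℝ => -(x^2 - 2*r*x*y + y^2) / (2*(1-r^2)))
      ((r * y - x) / (1 - r^2)) x := by
    refine (((((hasDerivAt_pow 2 x).sub (((hasDerivAt_id x).const_mul (2*r)).mul_const y)).add_const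
      (y^2)).neg).div_const (2*(1-r^2))).congr_deriv ?_
    generalize 1 - r^2 = u
    ring
  refine (hexp.exp.div_const (2*π*√(1-r^2))).congr_deriv ?_
  unfold phi2DerivX phi2
  ring

lemma hasDerivAt_phi2_y (x r y : ℝ) :
    HasDerivAt (fun y => phi2 x y r) (phi2 x y r * ((r * x - y) / (1 - r^2))) y := by
  simp_rw [phi2_comm x]
  exact hasDerivAt_phi2_x x r y

lemma hasDerivAt_phi2DerivX_y (x r y : ℝ) :
    HasDerivAt (fun y => phi2DerivX x y r) (phi2DerivXY x y r) y := by
  have hlin : HasDerivAt (fun y : ℝ => (r * y - x) / (1 - r^2)) (r / (1 - r^2)) y := by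
    simpa using (((hasDerivAt_id y).const_mul r).sub_const x).div_const (1 - r^2)
  refine ((hasDerivAt_phi2_y x r y).mul hlin).congr_deriv ?_
  unfold phi2DerivXY
  generalize 1 - r^2 = u
  ring

lemma hasDerivAt_phi2_corr (x y : ℝ) {r : ℝ} (hr : |r| < 1) :
    HasDerivAt (fun r => phi2 x y r) (phi2DerivXY x y r) r := by
  have hu : 0 < 1 - r^2 := sub_pos.2 ((sq_lt_one_iff_abs_lt_one r).2 hr)
  have hquad : HasDerivAt (fun r : ℝ => 1 - r^2) (-(2 * r)) r := by
    simpa using (hasDerivAt_pow 2 r).const_sub 1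
  have hexp : HasDerivAt (fun r : ℝ => -(x^2 - 2*r*x*y + y^2) / (2*(1-r^2)))
      ((r * x - y) * (r * y - x) / (1 - r^2)^2) r := by
    have hnum : HasDerivAt (fun r : ℝ => -(x^2 - 2*r*x*y + y^2)) (2 * x * y) r := by
      simpa using ((((hasDerivAt_id r).const_mul 2).mul_const x).mul_const y).sub_const
        (x^2 + y^2)
    refine (hnum.div (hquad.const_mul 2) (by positivity)).congr_deriv ?_
    field_simp
    ring
  have hnorm : HasDerivAt (fun r : ℝ => 2*π*√(1-r^2))
      (2 * π * (1 / (2 * √(1 - r^2)) * -(2 * r))) r :=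
    ((Real.hasDerivAt_sqrt hu.ne').comp r hquad).const_mul (2 * π)
  refine (hexp.exp.div hnorm (by positivity)).congr_deriv ?_
  unfold phi2DerivXY phi2
  field_simp
  rw [Real.sq_sqrt hu.le]
  ring

lemma abs_le_of_mem_ball_half {r t : ℝ} (ht : t ∈ Metric.ball r ((1 - |r|) / 2)) :
    |t| ≤ (1 + |r|) / 2 := by
  rw [Metric.mem_ball, Real.dist_eq] at ht
  linarith [abs_sub_abs_le_abs_sub t r]

noncomputable def gaussWeight (c z : ℝ) : ℝ := (1 + z^2) * exp (-c * z^2)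

lemma integrable_gaussWeight {c : ℝ} (hc : 0 < c) : Integrable (gaussWeight c) := by
  have hsq : Integrable fun z : ℝ => z^2 * exp (-c * z^2) := by
    simpa [Real.rpow_two] using integrable_rpow_mul_exp_neg_mul_sq hc (s := 2) (by norm_num)
  refine ((integrable_exp_neg_mul_sq hc).add hsq).congr (.of_forall fun z => ?_)
  simp only [Pi.add_apply, gaussWeight]
  ring

noncomputable def phi2Envelope (m x y : ℝ) : ℝ :=
  gaussWeight ((1 - m) / 2) x * gaussWeight ((1 - m) / 2) y *
    (3 / (2 * π * (1 - m^2)^2 * √(1 - m^2)))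

lemma integrable_phi2Envelope_x {m : ℝ} (hm : m < 1) (y : ℝ) :
    Integrable fun x => phi2Envelope m x y :=
  ((integrable_gaussWeight (by linarith)).mul_const _).mul_const _

lemma integrable_phi2Envelope_y {m : ℝ} (hm : m < 1) (x : ℝ) :
    Integrable fun y => phi2Envelope m x y :=
  ((integrable_gaussWeight (by linarith)).const_mul _).mul_const _

lemma integrable_phi2Envelope_prod {m : ℝ} (hm : m < 1) :
    Integrable (fun p : ℝ × ℝ => phi2Envelope m p.1 p.2) (volume.prod volume) :=
  ((integrable_gaussWeight (by linarith)).mul_prod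
    (integrable_gaussWeight (by linarith))).mul_const _

lemma phi2_le {m t : ℝ} (hm : m < 1) (ht : |t| ≤ m) (x y : ℝ) :
    phi2 x y t ≤
      exp (-((1 - m) / 2) * x^2) * exp (-((1 - m) / 2) * y^2) / (2 * π * √(1 - m^2)) := by
  have ht2 : t^2 ≤ m^2 := sq_le_sq.2 (ht.trans (le_abs_self m))
  have hv : 0 < 1 - m^2 := by nlinarith [abs_nonneg t]
  have hu : 0 < 1 - t^2 := by linarith
  have hquad : (1 - m) * (x^2 + y^2) ≤ x^2 - 2*t*x*y + y^2 := by
    have := abs_le.mp ht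
    nlinarith [mul_nonneg (by linarith : (0:ℝ) ≤ m + t) (sq_nonneg (x - y)),
      mul_nonneg (by linarith : (0:ℝ) ≤ m - t) (sq_nonneg (x + y))]
  have hexp : -(x^2 - 2*t*x*y + y^2) / (2 * (1 - t^2))
      ≤ -((1 - m) / 2) * x^2 + -((1 - m) / 2) * y^2 := by
    have hQ : 0 ≤ x^2 - 2*t*x*y + y^2 :=
      le_trans (mul_nonneg (by linarith) (by positivity)) hquad
    have : (x^2 - 2*t*x*y + y^2) / 2 ≤ (x^2 - 2*t*x*y + y^2) / (2 * (1 - t^2)) :=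
      div_le_div_of_nonneg_left hQ (by positivity) (by nlinarith)
    rw [neg_div]
    linarith
  unfold phi2
  rw [← exp_add]
  gcongr

lemma abs_phi2_mul_div_le_phi2Envelope {m t N x y : ℝ} (hm : m < 1) (ht : |t| ≤ m)
    (hN : |N| ≤ (1 + |x| + |y|)^2) :
    |phi2 x y t * (N / (1 - t^2)^2)| ≤ phi2Envelope m x y := by
  have ht2 : t^2 ≤ m^2 := sq_le_sq.2 (ht.trans (le_abs_self m))
  have hv : 0 < 1 - m^2 := by nlinarith [abs_nonneg t]
  have hpoly : (1 + |x| + |y|)^2 ≤ 3 * ((1 + x^2) * (1 + y^2)) := by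
    nlinarith [sq_abs x, sq_abs y, sq_nonneg (|x| - |y|), sq_nonneg (|x| - 1),
      sq_nonneg (|y| - 1), mul_nonneg (sq_nonneg x) (sq_nonneg y)]
  calc |phi2 x y t * (N / (1 - t^2)^2)| = phi2 x y t * (|N| / (1 - t^2)^2) := by
        rw [abs_mul, abs_of_nonneg (phi2_nonneg x y t), abs_div, abs_sq]
    _ ≤ exp (-((1 - m) / 2) * x^2) * exp (-((1 - m) / 2) * y^2) / (2 * π * √(1 - m^2))
        * (3 * ((1 + x^2) * (1 + y^2)) / (1 - m^2)^2) := by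
      gcongr
      all_goals first | exact phi2_le hm ht x y | linarith
    _ = phi2Envelope m x y := by
      unfold phi2Envelope gaussWeight
      field_simp

lemma abs_mul_sub_le {t a b : ℝ} (ht : |t| ≤ 1) : |t * a - b| ≤ |a| + |b| :=
  calc |t * a - b| ≤ |t| * |a| + |b| := by simpa only [abs_mul] using abs_sub (t * a) b
    _ ≤ |a| + |b| := by nlinarith [abs_nonneg a]

lemma abs_phi2_le_phi2Envelope {m t : ℝ} (hm : m < 1) (ht : |t| ≤ m) (x y : ℝ) :
    |phi2 x y t| ≤ phi2Envelope m x y := by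
  have hu : 0 < 1 - t^2 := sub_pos.2 ((sq_lt_one_iff_abs_lt_one t).2 (ht.trans_lt hm))
  have hN : |(1 - t^2)^2| ≤ (1 + |x| + |y|)^2 := by
    rw [abs_sq]
    nlinarith [sq_nonneg t, abs_nonneg x, abs_nonneg y]
  simpa [div_self (pow_pos hu 2).ne'] using abs_phi2_mul_div_le_phi2Envelope hm ht hN

lemma abs_phi2DerivX_le_phi2Envelope {m t : ℝ} (hm : m < 1) (ht : |t| ≤ m) (x y : ℝ) :
    |phi2DerivX x y t| ≤ phi2Envelope m x y := by
  have ht1 : |t| ≤ 1 := ht.trans hm.le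
  have hu : 0 < 1 - t^2 := sub_pos.2 ((sq_lt_one_iff_abs_lt_one t).2 (ht.trans_lt hm))
  have hN : |(t * y - x) * (1 - t^2)| ≤ (1 + |x| + |y|)^2 := by
    rw [abs_mul, abs_of_pos hu]
    nlinarith [abs_mul_sub_le (a := y) (b := x) ht1, abs_nonneg x, abs_nonneg y,
      abs_nonneg (t * y - x), sq_nonneg t]
  have hPD : phi2DerivX x y t = phi2 x y t * ((t * y - x) * (1 - t^2) / (1 - t^2)^2) := by
    unfold phi2DerivX
    field_simp
  rw [hPD]
  exact abs_phi2_mul_div_le_phi2Envelope hm ht hN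

lemma abs_phi2DerivXY_le_phi2Envelope {m t : ℝ} (hm : m < 1) (ht : |t| ≤ m) (x y : ℝ) :
    |phi2DerivXY x y t| ≤ phi2Envelope m x y := by
  have ht1 : |t| ≤ 1 := ht.trans hm.le
  have hu : 0 < 1 - t^2 := sub_pos.2 ((sq_lt_one_iff_abs_lt_one t).2 (ht.trans_lt hm))
  have hN : |(t * x - y) * (t * y - x) + t * (1 - t^2)| ≤ (1 + |x| + |y|)^2 := by
    have h1 := abs_mul_sub_le (a := x) (b := y) ht1
    have h2 := abs_mul_sub_le (a := y) (b := x) ht1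
    calc _ ≤ |(t * x - y) * (t * y - x)| + |t * (1 - t^2)| := abs_add_le _ _
      _ = |t * x - y| * |t * y - x| + |t| * (1 - t^2) := by rw [abs_mul, abs_mul, abs_of_pos hu]
      _ ≤ (|x| + |y|) * (|y| + |x|) + 1 * 1 :=
          add_le_add (mul_le_mul h1 h2 (abs_nonneg _) (by positivity))
            (mul_le_mul ht1 (by nlinarith [sq_nonneg t]) hu.le zero_le_one)
      _ ≤ (1 + |x| + |y|)^2 := by nlinarith [abs_nonneg x, abs_nonneg y]
  have hDD : phi2DerivXY x y t
      = phi2 x y t * (((t * x - y) * (t * y - x) + t * (1 - t^2)) / (1 - t^2)^2) := by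
    unfold phi2DerivXY
    field_simp
  rw [hDD]
  exact abs_phi2_mul_div_le_phi2Envelope hm ht hN

lemma integrable_phi2_y (x : ℝ) {r : ℝ} (hr : |r| < 1) : Integrable fun y => phi2 x y r :=
  (integrable_phi2Envelope_y hr x).mono'
    (Continuous.aestronglyMeasurable (by unfold phi2; fun_prop))
    (.of_forall (abs_phi2_le_phi2Envelope hr le_rfl x))

lemma integrable_phi2_x (y : ℝ) {r : ℝ} (hr : |r| < 1) : Integrable fun x => phi2 x y r :=
  (integrable_phi2Envelope_x hr y).mono'
    (Continuous.aestronglyMeasurable (by unfold phi2; fun_prop))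
    (.of_forall fun x => abs_phi2_le_phi2Envelope hr le_rfl x y)

lemma integrable_phi2DerivX_y (x : ℝ) {r : ℝ} (hr : |r| < 1) :
    Integrable fun y => phi2DerivX x y r :=
  (integrable_phi2Envelope_y hr x).mono'
    (Continuous.aestronglyMeasurable (by unfold phi2DerivX phi2; fun_prop))
    (.of_forall (abs_phi2DerivX_le_phi2Envelope hr le_rfl x))

lemma integrable_phi2DerivX_x (y : ℝ) {r : ℝ} (hr : |r| < 1) :
    Integrable fun x => phi2DerivX x y r :=
  (integrable_phi2Envelope_x hr y).mono'
    (Continuous.aestronglyMeasurable (by unfold phi2DerivX phi2; fun_prop))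
    (.of_forall fun x => abs_phi2DerivX_le_phi2Envelope hr le_rfl x y)

lemma integrable_phi2DerivXY_y (x : ℝ) {r : ℝ} (hr : |r| < 1) :
    Integrable fun y => phi2DerivXY x y r :=
  (integrable_phi2Envelope_y hr x).mono'
    (Continuous.aestronglyMeasurable (by unfold phi2DerivXY phi2; fun_prop))
    (.of_forall (abs_phi2DerivXY_le_phi2Envelope hr le_rfl x))

lemma integrable_integral_Iic_phi2 (a b : ℝ) {r : ℝ} (hr : |r| < 1) :
    Integrable (fun x => ∫ y in Iic b, phi2 x y r) (volume.restrict (Iic a)) := by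
  have h : Integrable (fun p : ℝ × ℝ => phi2 p.1 p.2 r) (volume.prod volume) :=
    (integrable_phi2Envelope_prod hr).mono'
      (Continuous.aestronglyMeasurable (by unfold phi2; fun_prop))
      (.of_forall fun p => abs_phi2_le_phi2Envelope hr le_rfl p.1 p.2)
  have h' := h.restrict (s := Iic a ×ˢ Iic b)
  rw [← Measure.prod_restrict] at h'
  exact h'.integral_prod_left

lemma integral_Iic_eq_of_hasDerivAt_of_integrable {E : Type*} [NormedAddCommGroup E]
    [NormedSpace ℝ E] [CompleteSpace E] {f f' : ℝ → E} (hderiv : ∀ x, HasDerivAt f (f' x) x)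
    (hf : Integrable f) (hf' : Integrable f') (a : ℝ) : ∫ x in Iic a, f' x = f a := by
  have hlim := tendsto_zero_of_hasDerivAt_of_integrableOn_Iic (a := a) (fun x _ => hderiv x)
    hf'.integrableOn hf.integrableOn
  simpa using integral_Iic_of_hasDerivAt_of_tendsto' (fun x _ => hderiv x) hf'.integrableOn hlim

lemma integral_Iic_phi2DerivXY (x b : ℝ) {r : ℝ} (hr : |r| < 1) :
    ∫ y in Iic b, phi2DerivXY x y r = phi2DerivX x b r :=
  integral_Iic_eq_of_hasDerivAt_of_integrable (hasDerivAt_phi2DerivX_y x r)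
    (integrable_phi2DerivX_y x hr) (integrable_phi2DerivXY_y x hr) b

lemma integral_Iic_phi2DerivX (a b : ℝ) {r : ℝ} (hr : |r| < 1) :
    ∫ x in Iic a, phi2DerivX x b r = phi2 a b r :=
  integral_Iic_eq_of_hasDerivAt_of_integrable (hasDerivAt_phi2_x b r)
    (integrable_phi2_x b hr) (integrable_phi2DerivX_x b hr) a

lemma hasDerivAt_integral_Iic_phi2 (x b : ℝ) {r : ℝ} (hr : |r| < 1) :
    HasDerivAt (fun t => ∫ y in Iic b, phi2 x y t) (phi2DerivX x b r) r := by
  have hm : (1 + |r|) / 2 < 1 := by linarith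
  have hball (t) (ht : t ∈ Metric.ball r ((1 - |r|) / 2)) := abs_le_of_mem_ball_half ht
  have key := hasDerivAt_integral_of_dominated_loc_of_deriv_le (μ := volume.restrict (Iic b))
    (F := fun t y => phi2 x y t)
    (F' := fun t y => phi2DerivXY x y t) (bound := fun y => phi2Envelope ((1 + |r|) / 2) x y)
    (Metric.ball_mem_nhds r (by linarith))
    (.of_forall fun t => Continuous.aestronglyMeasurable (by unfold phi2; fun_prop))
    (integrable_phi2_y x hr).integrableOn
    (Continuous.aestronglyMeasurable (by unfold phi2DerivXY phi2; fun_prop))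
    (.of_forall fun y t ht => abs_phi2DerivXY_le_phi2Envelope hm (hball t ht) x y)
    (integrable_phi2Envelope_y hm x).integrableOn
    (.of_forall fun y t ht => hasDerivAt_phi2_corr x y ((hball t ht).trans_lt hm))
  rw [integral_Iic_phi2DerivXY x b hr] at key
  exact key.2

/-- Plackett's identity. -/
theorem plackett (a b ρ : ℝ) (hρ : ρ ∈ Set.Ioo (-1 : ℝ) 1) :
    HasDerivAt (fun r => Phi2 a b r) (phi2 a b ρ) ρ := by
  have hρ1 : |ρ| < 1 := abs_lt.mpr hρ
  have hm : (1 + |ρ|) / 2 < 1 := by linarith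
  have hball (t) (ht : t ∈ Metric.ball ρ ((1 - |ρ|) / 2)) := abs_le_of_mem_ball_half ht
  have hnhds := Metric.ball_mem_nhds ρ (by linarith : 0 < (1 - |ρ|) / 2)
  have key := hasDerivAt_integral_of_dominated_loc_of_deriv_le (μ := volume.restrict (Iic a))
    (F := fun t x => ∫ y in Iic b, phi2 x y t) (F' := fun t x => phi2DerivX x b t)
    (bound := fun x => phi2Envelope ((1 + |ρ|) / 2) x b) hnhds
    (eventually_of_mem hnhds fun t ht =>
      (integrable_integral_Iic_phi2 a b ((hball t ht).trans_lt hm)).aestronglyMeasurable)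
    (integrable_integral_Iic_phi2 a b hρ1)
    (Continuous.aestronglyMeasurable (by unfold phi2DerivX phi2; fun_prop))
    (.of_forall fun x t ht => abs_phi2DerivX_le_phi2Envelope hm (hball t ht) x b)
    (integrable_phi2Envelope_x hm b).integrableOn
    (.of_forall fun x t ht => hasDerivAt_integral_Iic_phi2 x b ((hball t ht).trans_lt hm))
  rw [integral_Iic_phi2DerivX a b hρ1] at key
  exact key.2
end

section
/- For fixed real thresholds a, b, the function ρ ↦ Φ₂(a,b;ρ) is strictly increasing on (−1,1), where Φ₂ is the standard bivariate normal CDF with correlation ρ. Consequently the joint tail probability P(X > a, Y > b) for a standard bivariate normal pair (X,Y) with correlation ρ is strictly increasing in ρ. -/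
/-!
Writing `Y = ρ X + √(1 - ρ²) Z` with `X, Z` independent standard normals,
`Φ₂(a, b; ρ) = ∫_{x ≤ a} φ(x) Φ((b - ρ x) / √(1 - ρ²)) dx`. Differentiating under the integral,
the `ρ`-derivative of the integrand equals the `x`-derivative of `φ₂(x, b; ρ)` (Plackett's
identity), so `∂Φ₂/∂ρ = φ₂(a, b; ρ) > 0`. The tail probability is `Φ₂(-a, -b; ρ)` because
`φ₂(-x, -y; ρ) = φ₂(x, y; ρ)`.
-/

open Real MeasureTheory Set Matrix

open Filter Topology ProbabilityTheory

lemma phi_eq_gaussianPDFReal : phi = gaussianPDFReal 0 1 := by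
  ext x
  simp [phi, gaussianPDFReal, div_eq_inv_mul]

lemma phi_pos (x : ℝ) : 0 < phi x :=
  phi_eq_gaussianPDFReal ▸ gaussianPDFReal_pos 0 1 x one_ne_zero

lemma integrable_phi : Integrable phi :=
  phi_eq_gaussianPDFReal ▸ integrable_gaussianPDFReal 0 1

lemma continuous_phi : Continuous phi := by
  unfold phi
  fun_prop

lemma phi_le_one (x : ℝ) : phi x ≤ 1 := by
  have h2π : 1 ≤ √(2 * π) := Real.one_le_sqrt.2 (by linarith [Real.pi_gt_three])
  rw [phi, div_le_one (by positivity)]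
  exact (Real.exp_le_one_iff.2 (by nlinarith [sq_nonneg x])).trans h2π

lemma Phi_eq_cdf (x : ℝ) : Phi x = cdf (gaussianReal 0 1) x := by
  rw [cdf_eq_real, measureReal_def, gaussianReal_apply_eq_integral 0 one_ne_zero,
    ENNReal.toReal_ofReal (integral_nonneg (gaussianPDFReal_nonneg 0 1)), Phi,
    phi_eq_gaussianPDFReal]

lemma abs_Phi_le_one (x : ℝ) : |Phi x| ≤ 1 := by
  rw [Phi_eq_cdf, abs_of_nonneg (cdf_nonneg _ x)]
  exact cdf_le_one _ x

lemma tendsto_Phi_atBot : Tendsto Phi atBot (𝓝 0) := by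
  simpa only [funext Phi_eq_cdf] using tendsto_cdf_atBot (gaussianReal 0 1)

lemma hasDerivAt_Phi (x : ℝ) : HasDerivAt Phi (phi x) x := by
  have hPhi : ∀ y, Phi y = Phi 0 + ∫ t in (0 : ℝ)..y, phi t := fun y => by
    rw [← intervalIntegral.integral_Iic_sub_Iic integrable_phi.integrableOn
      integrable_phi.integrableOn, Phi, Phi, add_sub_cancel]
  rw [funext hPhi]
  exact (intervalIntegral.integral_hasDerivAt_right integrable_phi.intervalIntegrable
    (continuous_phi.stronglyMeasurableAtFilter _ _) continuous_phi.continuousAt).const_add _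

lemma continuous_Phi : Continuous Phi :=
  continuous_iff_continuousAt.2 fun x => (hasDerivAt_Phi x).continuousAt

lemma tendsto_phi_atBot : Tendsto phi atBot (𝓝 0) := by
  have h := ((tendsto_rpow_abs_mul_exp_neg_mul_sq_cocompact one_half_pos 0).mono_left
    atBot_le_cocompact).div_const √(2 * π)
  rw [zero_div] at h
  refine h.congr fun x => ?_
  rw [phi, Real.rpow_zero, one_mul]
  ring_nf

lemma integrable_phi_mul_add_abs (c : ℝ) : Integrable fun x => phi x * (c + |x|) := by
  have habs : Integrable fun x => |x| * phi x := by
    refine ((integrable_mul_exp_neg_mul_sq one_half_pos).abs.div_const √(2 * π)).congr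
      (ae_of_all _ fun x => ?_)
    simp only [phi, abs_mul, abs_of_pos (Real.exp_pos _)]
    ring_nf
  refine ((integrable_phi.mul_const c).add habs).congr (ae_of_all _ fun x => ?_)
  simp only [Pi.add_apply]
  ring

lemma one_sub_sq_pos_of_abs_lt_one {ρ : ℝ} (hρ : |ρ| < 1) : 0 < 1 - ρ ^ 2 :=
  sub_pos.2 ((sq_lt_one_iff_abs_lt_one ρ).2 hρ)

lemma phi2_pos {ρ : ℝ} (hρ : |ρ| < 1) (x y : ℝ) : 0 < phi2 x y ρ := by
  have := one_sub_sq_pos_of_abs_lt_one hρ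
  unfold phi2
  positivity

lemma phi2_neg_neg (x y ρ : ℝ) : phi2 (-x) (-y) ρ = phi2 x y ρ := by
  unfold phi2
  ring_nf

lemma continuous_phi2_left (y ρ : ℝ) : Continuous fun x => phi2 x y ρ := by
  unfold phi2
  fun_prop

lemma phi2_eq_phi_mul_phi {ρ : ℝ} (hρ : |ρ| < 1) (x y : ℝ) :
    phi2 x y ρ = phi x * phi ((y - ρ * x) / √(1 - ρ ^ 2)) / √(1 - ρ ^ 2) := by
  have h1 := one_sub_sq_pos_of_abs_lt_one hρ
  have hs : √(1 - ρ ^ 2) ^ 2 = 1 - ρ ^ 2 := Real.sq_sqrt h1.le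
  have h2π : √(2 * π) * √(2 * π) = 2 * π := Real.mul_self_sqrt (by positivity)
  have hexp : -x ^ 2 / 2 + -((y - ρ * x) / √(1 - ρ ^ 2)) ^ 2 / 2 =
      -(x ^ 2 - 2 * ρ * x * y + y ^ 2) / (2 * (1 - ρ ^ 2)) := by
    rw [div_pow, hs]
    field_simp
    ring
  rw [phi2, phi, phi, div_mul_div_comm, ← Real.exp_add, hexp, div_div, h2π, mul_assoc]

lemma phi2_le_s3 {ρ : ℝ} (hρ : |ρ| < 1) (x y : ℝ) : phi2 x y ρ ≤ phi x / √(1 - ρ ^ 2) := by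
  rw [phi2_eq_phi_mul_phi hρ]
  gcongr
  exact mul_le_of_le_one_right (phi_pos x).le (phi_le_one _)

lemma tendsto_phi2_atBot {ρ : ℝ} (hρ : |ρ| < 1) (y : ℝ) :
    Tendsto (fun x => phi2 x y ρ) atBot (𝓝 0) := by
  have h := tendsto_phi_atBot.div_const √(1 - ρ ^ 2)
  rw [zero_div] at h
  exact tendsto_of_tendsto_of_tendsto_of_le_of_le tendsto_const_nhds h
    (fun x => (phi2_pos hρ x y).le) (fun x => phi2_le_s3 hρ x y)

lemma hasDerivAt_phi2_left (x y ρ : ℝ) :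
    HasDerivAt (fun x => phi2 x y ρ) (phi2 x y ρ * ((ρ * y - x) / (1 - ρ ^ 2))) x := by
  have hq : HasDerivAt (fun x => -(x ^ 2 - 2 * ρ * x * y + y ^ 2) / (2 * (1 - ρ ^ 2)))
      (-(2 * x - 2 * ρ * y) / (2 * (1 - ρ ^ 2))) x := by
    have := ((hasDerivAt_pow 2 x).sub (((hasDerivAt_id x).const_mul (2 * ρ)).mul_const y)).add_const
      (y ^ 2)
    simpa using this.neg.div_const (2 * (1 - ρ ^ 2))
  have hq' : -(2 * x - 2 * ρ * y) / (2 * (1 - ρ ^ 2)) = (ρ * y - x) / (1 - ρ ^ 2) := by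
    rw [show -(2 * x - 2 * ρ * y) = 2 * (ρ * y - x) by ring, mul_div_mul_left _ _ two_ne_zero]
  refine (hq.exp.div_const _).congr_deriv ?_
  rw [phi2, hq']
  ring

lemma setIntegral_Iic_phi2 {ρ : ℝ} (hρ : |ρ| < 1) (x b : ℝ) :
    ∫ y in Iic b, phi2 x y ρ = phi x * Phi ((b - ρ * x) / √(1 - ρ ^ 2)) := by
  have hs : 0 < √(1 - ρ ^ 2) := Real.sqrt_pos.2 (one_sub_sq_pos_of_abs_lt_one hρ)
  have hderiv (y : ℝ) : HasDerivAt (fun y => phi x * Phi ((y - ρ * x) / √(1 - ρ ^ 2)))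
      (phi2 x y ρ) y := by
    have hu : HasDerivAt (fun y => (y - ρ * x) / √(1 - ρ ^ 2)) (1 / √(1 - ρ ^ 2)) y := by
      simpa using ((hasDerivAt_id y).sub_const (ρ * x)).div_const √(1 - ρ ^ 2)
    refine (((hasDerivAt_Phi _).comp y hu).const_mul (phi x)).congr_deriv ?_
    rw [phi2_eq_phi_mul_phi hρ]
    ring
  have hint : Integrable fun y => phi2 x y ρ := by
    simpa only [phi2_eq_phi_mul_phi hρ] using
      (((integrable_phi.comp_div hs.ne').comp_sub_right (ρ * x)).const_mul (phi x)).div_const _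
  have hlim : Tendsto (fun y => phi x * Phi ((y - ρ * x) / √(1 - ρ ^ 2))) atBot (𝓝 0) := by
    have hu : Tendsto (fun y => (y - ρ * x) / √(1 - ρ ^ 2)) atBot atBot :=
      (tendsto_atBot_add_const_right _ _ tendsto_id).atBot_div_const hs
    simpa using (tendsto_Phi_atBot.comp hu).const_mul (phi x)
  simpa using integral_Iic_of_hasDerivAt_of_tendsto' (fun y _ => hderiv y) hint.integrableOn hlim

lemma Phi2_eq_integral_phi_mul_Phi (a b : ℝ) {ρ : ℝ} (hρ : |ρ| < 1) :
    Phi2 a b ρ = ∫ x in Iic a, phi x * Phi ((b - ρ * x) / √(1 - ρ ^ 2)) := by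
  simp_rw [Phi2, setIntegral_Iic_phi2 hρ]

lemma hasDerivAt_phi_mul_Phi_corr (x b : ℝ) {ρ : ℝ} (hρ : |ρ| < 1) :
    HasDerivAt (fun r => phi x * Phi ((b - r * x) / √(1 - r ^ 2)))
      (phi2 x b ρ * ((ρ * b - x) / (1 - ρ ^ 2))) ρ := by
  have h1 := one_sub_sq_pos_of_abs_lt_one hρ
  have hs : 0 < √(1 - ρ ^ 2) := Real.sqrt_pos.2 h1
  have hsq : √(1 - ρ ^ 2) ^ 2 = 1 - ρ ^ 2 := Real.sq_sqrt h1.le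
  have hsqrt : HasDerivAt (fun r => √(1 - r ^ 2)) (-(2 * ρ) / (2 * √(1 - ρ ^ 2))) ρ := by
    simpa using ((hasDerivAt_pow 2 ρ).const_sub 1).sqrt h1.ne'
  have hnum : HasDerivAt (fun r => b - r * x) (-x) ρ := by
    simpa using ((hasDerivAt_id ρ).mul_const x).const_sub b
  refine (((hasDerivAt_Phi _).comp ρ (hnum.div hsqrt hs.ne')).const_mul (phi x)).congr_deriv ?_
  rw [phi2_eq_phi_mul_phi hρ]
  simp only [Pi.div_apply]
  field_simp
  rw [hsq]
  ring

lemma norm_phi2_mul_le {r ρ : ℝ} (hr : r < 1) (hρ : |ρ| ≤ r) (x b : ℝ) :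
    ‖phi2 x b ρ * ((ρ * b - x) / (1 - ρ ^ 2))‖ ≤
      phi x * (|b| + |x|) / (√(1 - r ^ 2) * (1 - r ^ 2)) := by
  have hρ1 : |ρ| < 1 := hρ.trans_lt hr
  have hr1 : 0 < 1 - r ^ 2 :=
    one_sub_sq_pos_of_abs_lt_one ((abs_of_nonneg ((abs_nonneg ρ).trans hρ)).trans_lt hr)
  have hsq : ρ ^ 2 ≤ r ^ 2 := sq_le_sq' (abs_le.1 hρ).1 (abs_le.1 hρ).2
  have hnum : |ρ * b - x| ≤ |b| + |x| := by
    calc |ρ * b - x| ≤ |ρ| * |b| + |x| := by rw [← abs_mul]; exact abs_sub _ _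
      _ ≤ |b| + |x| := by gcongr; exact mul_le_of_le_one_left (abs_nonneg b) hρ1.le
  have hρ2 := one_sub_sq_pos_of_abs_lt_one hρ1
  have hphi := phi_pos x
  rw [norm_mul, Real.norm_eq_abs, Real.norm_eq_abs, abs_of_pos (phi2_pos hρ1 x b), abs_div,
    abs_of_pos hρ2]
  calc phi2 x b ρ * (|ρ * b - x| / (1 - ρ ^ 2))
      ≤ phi x / √(1 - r ^ 2) * ((|b| + |x|) / (1 - r ^ 2)) := by
        refine mul_le_mul ((phi2_le_s3 hρ1 x b).trans (by gcongr)) (by gcongr) (by positivity)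
          (by positivity)
    _ = phi x * (|b| + |x|) / (√(1 - r ^ 2) * (1 - r ^ 2)) := div_mul_div_comm _ _ _ _

lemma hasDerivAt_integral_phi_mul_Phi (a b : ℝ) {ρ₀ : ℝ} (hρ₀ : |ρ₀| < 1) :
    IntegrableOn (fun x => phi2 x b ρ₀ * ((ρ₀ * b - x) / (1 - ρ₀ ^ 2))) (Iic a) ∧
    HasDerivAt (fun ρ => ∫ x in Iic a, phi x * Phi ((b - ρ * x) / √(1 - ρ ^ 2)))
      (∫ x in Iic a, phi2 x b ρ₀ * ((ρ₀ * b - x) / (1 - ρ₀ ^ 2))) ρ₀ := by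
  set r := (1 + |ρ₀|) / 2 with hr_def
  have hr : r < 1 := by linarith
  have hnhds : Icc (-r) r ∈ 𝓝 ρ₀ := by
    refine Icc_mem_nhds ?_ ?_ <;> linarith [neg_abs_le ρ₀, le_abs_self ρ₀]
  have hcont (ρ : ℝ) : Continuous fun x => phi x * Phi ((b - ρ * x) / √(1 - ρ ^ 2)) :=
    continuous_phi.mul (continuous_Phi.comp (by fun_prop))
  refine hasDerivAt_integral_of_dominated_loc_of_deriv_le hnhds
    (Eventually.of_forall fun ρ => (hcont ρ).aestronglyMeasurable) ?_
    ((continuous_phi2_left b ρ₀).mul (by fun_prop)).aestronglyMeasurable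
    (ae_of_all _ fun x ρ hρ => norm_phi2_mul_le hr (abs_le.2 hρ) x b)
    ((integrable_phi_mul_add_abs |b|).div_const _).integrableOn
    (ae_of_all _ fun x ρ hρ => hasDerivAt_phi_mul_Phi_corr x b
      ((abs_le.2 hρ).trans_lt hr))
  refine integrable_phi.integrableOn.mono' (hcont ρ₀).aestronglyMeasurable
    (ae_of_all _ fun x => ?_)
  rw [norm_mul, Real.norm_eq_abs, abs_of_pos (phi_pos x)]
  exact mul_le_of_le_one_right (phi_pos x).le (abs_Phi_le_one _)

lemma hasDerivAt_Phi2 (a b : ℝ) {ρ : ℝ} (hρ : |ρ| < 1) :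
    HasDerivAt (Phi2 a b) (phi2 a b ρ) ρ := by
  obtain ⟨hint, hderiv⟩ := hasDerivAt_integral_phi_mul_Phi a b hρ
  have hFTC : ∫ x in Iic a, phi2 x b ρ * ((ρ * b - x) / (1 - ρ ^ 2)) = phi2 a b ρ := by
    simpa using integral_Iic_of_hasDerivAt_of_tendsto' (fun x _ => hasDerivAt_phi2_left x b ρ)
      hint (tendsto_phi2_atBot hρ b)
  rw [hFTC] at hderiv
  refine hderiv.congr_of_eventuallyEq ?_
  filter_upwards [(isOpen_lt continuous_abs continuous_const).mem_nhds hρ] with r hr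
  exact Phi2_eq_integral_phi_mul_Phi a b hr

lemma strictMonoOn_Phi2 (a b : ℝ) : StrictMonoOn (Phi2 a b) (Ioo (-1) 1) := by
  have hderiv (ρ : ℝ) (hρ : ρ ∈ Ioo (-1 : ℝ) 1) : HasDerivAt (Phi2 a b) (phi2 a b ρ) ρ :=
    hasDerivAt_Phi2 a b (abs_lt.2 hρ)
  refine strictMonoOn_of_hasDerivWithinAt_pos (f' := phi2 a b) (convex_Ioo _ _)
    (fun ρ hρ => (hderiv ρ hρ).continuousAt.continuousWithinAt) (fun ρ hρ => ?_) (fun ρ hρ => ?_)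
  · rw [interior_Ioo] at hρ ⊢
    exact (hderiv ρ hρ).hasDerivWithinAt
  · rw [interior_Ioo] at hρ
    exact phi2_pos (abs_lt.2 hρ) a b

lemma PhiBar2_eq_Phi2_neg (a b ρ : ℝ) : PhiBar2 a b ρ = Phi2 (-a) (-b) ρ := by
  have hinner (x : ℝ) : ∫ y in Ioi b, phi2 (-x) y ρ = ∫ y in Iic (-b), phi2 x y ρ := by
    rw [← integral_comp_neg_Ioi]
    simp_rw [← phi2_neg_neg x, neg_neg]
  rw [Phi2, ← integral_comp_neg_Ioi]
  simp_rw [← hinner, neg_neg]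
  rfl

/-- the bivariate normal CDF, and the joint tail probability, are strictly
increasing in the correlation. -/
theorem Phi2_strictMono_in_corr (a b : ℝ) :
    StrictMonoOn (fun ρ => Phi2 a b ρ) (Set.Ioo (-1 : ℝ) 1) ∧
    StrictMonoOn (fun ρ => PhiBar2 a b ρ) (Set.Ioo (-1 : ℝ) 1) := by
  refine ⟨strictMonoOn_Phi2 a b, ?_⟩
  simpa only [PhiBar2_eq_Phi2_neg] using strictMonoOn_Phi2 (-a) (-b)
end
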